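/- arXiv:1408.1242 — 3 statements merged into one kernel-verified Lean document; each statement's English description precedes it below -/
import Mathlib

section
/- With D₀, ⟨·⟩, ≤ and the ultrafilter Î as in the context, let x, y : D₀ → ℝ be two nets of real numbers. Then the following are equivalent: (a) there exists A ∈ Î such that x_ε = O_{a,A}(y_ε) for every a ∈ A; (b) there exists H ∈ ℝ_{>0} such that {φ ∈ D₀ | |x_φ| ≤ H·|y_φ|} ∈ Î (i.e. |x_φ| ≤ H·|y_φ| holds almost everywhere with respect to Î). -/
/-- Test functions: smooth compactly supported functions `ℝ^d → ℝ`. -/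
def TestFn (d : ℕ) : Type :=
  {φ : (Fin d → ℝ) → ℝ // ContDiff ℝ (⊤ : ℕ∞) φ ∧ HasCompactSupport φ}

open Classical in
/-- `⟨φ⟩ := diam (supp φ)` if `φ ≠ 0`, and `⟨φ⟩ := 1` if `φ = 0`. -/
noncomputable def dbar {d : ℕ} (φ : TestFn d) : ℝ :=
  if φ.1 = 0 then 1 else Metric.diam (tsupport φ.1)

/-- `x_ε = O_{a,A}(y_ε)` in `(D₀, ≤)`: there are `H > 0` and `ε₀ ∈ A_{≤a}` such that
`|x_ε| ≤ H·|y_ε|` for all `ε ∈ A_{≤ε₀}`. -/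
def BigOhat {d : ℕ} (a : TestFn d) (A : Set (TestFn d)) (x y : TestFn d → ℝ) : Prop :=
  ∃ H : ℝ, 0 < H ∧ ∃ ε₀ ∈ A, dbar ε₀ ≤ dbar a ∧
    ∀ ε ∈ A, dbar ε ≤ dbar ε₀ → |x ε| ≤ H * |y ε|

/-- For `d ≥ 1`, `dbar φ > 0` for every test function. -/
lemma dbar_pos {d : ℕ} (hd : 1 ≤ d) (φ : TestFn d) : 0 < dbar φ := by
  unfold dbar
  split_ifs with h
  · norm_num
  · -- φ.1 ≠ 0; support is open nonempty, so tsupport has two points at positive distance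
    obtain ⟨x0, hx0⟩ : ∃ x, φ.1 x ≠ 0 := by
      by_contra hc; push_neg at hc; exact h (funext hc)
    have hx0mem : x0 ∈ Function.support φ.1 := hx0
    have hopen : IsOpen (Function.support φ.1) := φ.2.1.continuous.isOpen_support
    obtain ⟨r, hr, hball⟩ := Metric.isOpen_iff.mp hopen x0 hx0mem
    haveI : Nonempty (Fin d) := ⟨⟨0, hd⟩⟩
    set v : Fin d → ℝ := Pi.single ⟨0, hd⟩ (r / 2) with hv
    have hnv : ‖v‖ = r / 2 := by
      rw [hv, Pi.norm_single, Real.norm_eq_abs, abs_of_pos (by linarith)]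
    have hx1mem : x0 + v ∈ Function.support φ.1 := by
      apply hball
      simp only [Metric.mem_ball, dist_eq_norm, add_sub_cancel_left, hnv]
      linarith
    have hb : Bornology.IsBounded (tsupport φ.1) := φ.2.2.isBounded
    have hdist : dist (x0 + v) x0 ≤ Metric.diam (tsupport φ.1) :=
      Metric.dist_le_diam_of_mem hb (subset_tsupport _ hx1mem) (subset_tsupport _ hx0mem)
    have : dist (x0 + v) x0 = r / 2 := by
      rw [dist_eq_norm, add_sub_cancel_left, hnv]
    linarith

/-- In the set of indices `(D₀, ≤, Î)` of the algebra of asymptotic functions, for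
nets `x, y : D₀ → ℝ`: there exists `A ∈ Î` with `x_ε = O_{a,A}(y_ε)` for every
`a ∈ A`, if and only if there exists `H > 0` with `|x_φ| ≤ H·|y_φ|` almost
everywhere w.r.t. `Î`. -/
theorem bigO_iff_ae (d : ℕ) (hd : 1 ≤ d) (F : Ultrafilter (TestFn d))
    (hD : ∀ n : ℕ, 1 ≤ n → {φ : TestFn d | dbar φ ≤ 1 / (n : ℝ)} ∈ F)
    (x y : TestFn d → ℝ) :
    (∃ A ∈ F, ∀ a ∈ A, BigOhat a A x y) ↔
      (∃ H : ℝ, 0 < H ∧ {φ : TestFn d | |x φ| ≤ H * |y φ|} ∈ F) := by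
  constructor
  · rintro ⟨A, hA, hBig⟩
    obtain ⟨a, ha⟩ := Ultrafilter.nonempty_of_mem hA
    obtain ⟨H, hH, ε₀, hε₀A, -, hbound⟩ := hBig a ha
    obtain ⟨n, hn⟩ := exists_nat_one_div_lt (dbar_pos hd ε₀)
    refine ⟨H, hH, ?_⟩
    have hDn : {φ : TestFn d | dbar φ ≤ 1 / ((n + 1 : ℕ) : ℝ)} ∈ F :=
      hD (n + 1) (Nat.le_add_left 1 n)
    have : A ∩ {φ : TestFn d | dbar φ ≤ 1 / ((n + 1 : ℕ) : ℝ)} ⊆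
        {φ : TestFn d | |x φ| ≤ H * |y φ|} := by
      rintro ε ⟨hεA, hεd⟩
      refine hbound ε hεA ?_
      have : ((n + 1 : ℕ) : ℝ) = (n : ℝ) + 1 := by push_cast; ring
      rw [this] at hεd
      exact hεd.trans hn.le
    exact F.mem_of_superset (F.inter_mem hA hDn) this
  · rintro ⟨H, hH, hmem⟩
    refine ⟨{φ : TestFn d | |x φ| ≤ H * |y φ|}, hmem, ?_⟩
    intro a ha
    exact ⟨H, hH, a, ha, le_refl _, fun ε hε _ => hε⟩
end

section
/- Let Ω ⊆ ℝⁿ be open and, with A₀, A_q, ⊙, ≤ and Ω_φ as in the context, let u = (u_φ)_{φ∈A₀} be a family with u_φ : Ω_φ → ℝ smooth for each φ ∈ A₀. Then the following are equivalent (moderateness of the full Colombeau algebra): (a) for every compact K ⊆ Ω and every multi-index α ∈ ℕⁿ there exists N ∈ ℕ such that for all φ ∈ A_N there exist H ∈ ℝ_{>0} and r₀ ∈ (0,1] with sup_{x ∈ K ∩ Ω_{r⊙φ}} |∂^α u_{r⊙φ}(x)| ≤ H·r^{-N} for all r ∈ (0,r₀]; (b) for every compact K ⊆ Ω and every multi-index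 α ∈ ℕⁿ there exist N ∈ ℕ and q ∈ ℕ such that for all φ ∈ A_q there exist H ∈ ℝ_{>0} and ε₀ ∈ (∅,φ] with sup_{x ∈ K ∩ Ω_ε} |∂^α u_ε(x)| ≤ H·(diam(supp ε))^{-N} for all ε ∈ (∅,ε₀]. (Suprema over the empty set are taken to be 0.) -/
open MeasureTheory

/-- The scaling `r ⊙ φ`, `(r ⊙ φ)(y) = r^{-n}·φ(y/r)`. -/
noncomputable def sc (n : ℕ) (r : ℝ) (φ : (Fin n → ℝ) → ℝ) : (Fin n → ℝ) → ℝ :=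
  fun y => (1 / r ^ n) * φ (r⁻¹ • y)

/-- `A₀`: smooth compactly supported functions `ℝⁿ → ℝ` with integral `1`. -/
def A0 (n : ℕ) : Set ((Fin n → ℝ) → ℝ) :=
  {φ | ContDiff ℝ (⊤ : ℕ∞) φ ∧ HasCompactSupport φ ∧ ∫ x : Fin n → ℝ, φ x = 1}

/-- The order on `I^e = A₀`: `ε ≤ e` iff `ε = r ⊙ e` for some `r ∈ (0, 1]`. -/
def leA (n : ℕ) (ε e : (Fin n → ℝ) → ℝ) : Prop :=
  ∃ r : ℝ, 0 < r ∧ r ≤ 1 ∧ ε = sc n r e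

/-- `A_q`: elements of `A₀` all of whose moments of order `1 ≤ |α| ≤ q` vanish. -/
def Aq (n q : ℕ) : Set ((Fin n → ℝ) → ℝ) :=
  {φ | φ ∈ A0 n ∧ ∀ α : Fin n → ℕ, 1 ≤ ∑ i, α i → ∑ i, α i ≤ q →
    ∫ x : Fin n → ℝ, (∏ i, x i ^ α i) * φ x = 0}

/-- Iterated partial derivative along a list of coordinate directions. -/
noncomputable def pderivList (n : ℕ) : List (Fin n) → ((Fin n → ℝ) → ℝ) → (Fin n → ℝ) → ℝ
  | [], f => f
  | i :: l, f => pderivList n l (fun x => fderiv ℝ f x (Pi.single i 1))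

/-- The iterated partial derivative `∂^α` for a multi-index `α ∈ ℕⁿ`. -/
noncomputable def pderivMulti (n : ℕ) (α : Fin n → ℕ) (f : (Fin n → ℝ) → ℝ) :
    (Fin n → ℝ) → ℝ :=
  pderivList n ((List.finRange n).flatMap fun i => List.replicate (α i) i) f

/-- `Ω_φ := {x ∈ Ω | supp φ + x ⊆ Ω}`. -/
def OmegaPhi (n : ℕ) (Ω : Set (Fin n → ℝ)) (φ : (Fin n → ℝ) → ℝ) : Set (Fin n → ℝ) :=
  {x | x ∈ Ω ∧ ∀ y ∈ tsupport φ, y + x ∈ Ω}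


open Pointwise in
private lemma sc_sc' (n : ℕ) (r s : ℝ) (φ : (Fin n → ℝ) → ℝ) :
    sc n r (sc n s φ) = sc n (r * s) φ := by
  funext y
  simp only [sc, smul_smul, mul_inv]
  rw [mul_comm s⁻¹ r⁻¹, mul_pow]
  ring

open Pointwise in
private lemma support_sc' (n : ℕ) {r : ℝ} (hr : 0 < r) (φ : (Fin n → ℝ) → ℝ) :
    Function.support (sc n r φ) = r • Function.support φ := by
  ext y
  simp only [Function.mem_support, sc, Set.mem_smul_set_iff_inv_smul_mem₀ hr.ne']
  have : (1 / r ^ n) ≠ 0 := by positivity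
  simp [mul_ne_zero_iff, this, hr.ne']

open Pointwise in
private lemma tsupport_sc' (n : ℕ) {r : ℝ} (hr : 0 < r) (φ : (Fin n → ℝ) → ℝ) :
    tsupport (sc n r φ) = r • tsupport φ := by
  rw [tsupport, support_sc' n hr, closure_smul₀' hr.ne', tsupport]

private lemma sc_mem_A0' (n : ℕ) {r : ℝ} (hr : 0 < r) {φ : (Fin n → ℝ) → ℝ} (hφ : φ ∈ A0 n) :
    sc n r φ ∈ A0 n := by
  obtain ⟨h1, h2, h3⟩ := hφ
  refine ⟨?_, ?_, ?_⟩
  · exact ContDiff.mul contDiff_const (h1.comp (contDiff_id.const_smul r⁻¹))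
  · rw [HasCompactSupport, tsupport_sc' n hr]
    exact h2.smul r
  · have : ∫ x : Fin n → ℝ, sc n r φ x = (1 / r ^ n) * ∫ x : Fin n → ℝ, φ (r⁻¹ • x) := by
      simp only [sc]; exact integral_const_mul _ _
    rw [this, Measure.integral_comp_inv_smul_of_nonneg volume φ hr.le,
      Module.finrank_fin_fun, h3, smul_eq_mul]
    field_simp

private lemma diam_tsupport_pos' (n : ℕ) (hn : 1 ≤ n) {φ : (Fin n → ℝ) → ℝ} (hφ : φ ∈ A0 n) :
    0 < Metric.diam (tsupport φ) := by
  obtain ⟨h1, h2, h3⟩ := hφ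
  have hne : (Function.support φ).Nonempty := by
    by_contra h
    rw [Set.not_nonempty_iff_eq_empty, Function.support_eq_empty_iff] at h
    simp [h] at h3
  obtain ⟨x, hx⟩ := hne
  have hopen : IsOpen (Function.support φ) := h1.continuous.isOpen_support
  obtain ⟨δ, hδ, hball⟩ := Metric.isOpen_iff.1 hopen x hx
  haveI : Nonempty (Fin n) := ⟨⟨0, hn⟩⟩
  set y : Fin n → ℝ := x + (fun _ => δ / 2) with hy
  have hdist : dist y x = δ / 2 := by
    rw [dist_eq_norm, hy, add_sub_cancel_left]
    rw [show ‖(fun _ : Fin n => δ / 2)‖ = ‖(δ/2 : ℝ)‖ from pi_norm_const _]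
    rw [Real.norm_eq_abs, abs_of_pos (by linarith)]
  have hyK : y ∈ Function.support φ := hball (by rw [Metric.mem_ball, hdist]; linarith)
  have hb : Bornology.IsBounded (tsupport φ) := h2.isBounded
  have := Metric.dist_le_diam_of_mem hb (subset_tsupport φ hyK) (subset_tsupport φ hx)
  linarith [hdist ▸ this]

private lemma Aq_antitone' (n : ℕ) {q q' : ℕ} (h : q ≤ q') : Aq n q' ⊆ Aq n q :=
  fun _ hφ => ⟨hφ.1, fun α h1 h2 => hφ.2 α h1 (h2.trans h)⟩

private lemma diam_tsupport_sc' (n : ℕ) {r : ℝ} (hr : 0 < r) (φ : (Fin n → ℝ) → ℝ) :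
    Metric.diam (tsupport (sc n r φ)) = r * Metric.diam (tsupport φ) := by
  rw [tsupport_sc' n hr, diam_smul₀, Real.norm_eq_abs, abs_of_pos hr]

/-- Moderateness for the full Colombeau algebra: the classical definition (via
`R(ε ⊙ φ, x)` and `O(r^{-N})` as `r → 0⁺`, with `φ ∈ A_N`) is equivalent to the
formulation via the set of indices `𝕀^e` and the asymptotics `O(⟨ε⟩^{-N})`.
Suprema over the empty set are `0` (the convention of `Real.sSup`). -/
theorem full_moderate_iff (n : ℕ) (hn : 1 ≤ n) (Ω : Set (Fin n → ℝ)) (hΩ : IsOpen Ω)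
    (u : ((Fin n → ℝ) → ℝ) → (Fin n → ℝ) → ℝ)
    (hu : ∀ φ ∈ A0 n, ContDiffOn ℝ (⊤ : ℕ∞) (u φ) (OmegaPhi n Ω φ)) :
    (∀ K : Set (Fin n → ℝ), K ⊆ Ω → IsCompact K → ∀ α : Fin n → ℕ, ∃ N : ℕ,
        ∀ φ ∈ Aq n N, ∃ H : ℝ, 0 < H ∧ ∃ r₀ : ℝ, 0 < r₀ ∧ r₀ ≤ 1 ∧
          ∀ r : ℝ, 0 < r → r ≤ r₀ →
            (⨆ x ∈ K ∩ OmegaPhi n Ω (sc n r φ), |pderivMulti n α (u (sc n r φ)) x|) ≤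
              H * r ^ (-(N : ℤ))) ↔
      (∀ K : Set (Fin n → ℝ), K ⊆ Ω → IsCompact K → ∀ α : Fin n → ℕ, ∃ N q : ℕ,
        ∀ φ ∈ Aq n q, ∃ H : ℝ, 0 < H ∧ ∃ ε₀, ε₀ ∈ A0 n ∧ leA n ε₀ φ ∧
          ∀ ε, ε ∈ A0 n → leA n ε ε₀ →
            (⨆ x ∈ K ∩ OmegaPhi n Ω ε, |pderivMulti n α (u ε) x|) ≤
              H * Metric.diam (tsupport ε) ^ (-(N : ℤ))) := by
  constructor
  · intro ha K hK hKc α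
    obtain ⟨N, hN⟩ := ha K hK hKc α
    refine ⟨N, N, fun φ hφ => ?_⟩
    obtain ⟨H, hH, r₀, hr₀0, hr₀1, hbd⟩ := hN φ hφ
    set d := Metric.diam (tsupport φ) with hd
    have hdpos : 0 < d := diam_tsupport_pos' n hn hφ.1
    refine ⟨H * d ^ N, by positivity, sc n r₀ φ, sc_mem_A0' n hr₀0 hφ.1,
      ⟨r₀, hr₀0, hr₀1, rfl⟩, ?_⟩
    rintro ε hε ⟨s, hs0, hs1, rfl⟩
    rw [sc_sc']
    have ht0 : 0 < s * r₀ := mul_pos hs0 hr₀0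
    have htr : s * r₀ ≤ r₀ := by nlinarith
    have hb := hbd (s * r₀) ht0 htr
    rw [diam_tsupport_sc' n ht0, ← hd]
    have : H * d ^ N * (s * r₀ * d) ^ (-(N:ℤ)) = H * (s * r₀) ^ (-(N:ℤ)) := by
      rw [zpow_neg, zpow_neg, zpow_natCast, zpow_natCast, mul_pow]
      field_simp
    rw [this]; exact hb
  · intro hb K hK hKc α
    obtain ⟨N, q, hNq⟩ := hb K hK hKc α
    refine ⟨max N q, fun φ hφ => ?_⟩
    have hφq : φ ∈ Aq n q := Aq_antitone' n (le_max_right N q) hφ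
    obtain ⟨H, hH, ε₀, hε₀A, ⟨r₁, hr₁0, hr₁1, hε₀⟩, hbd⟩ := hNq φ hφq
    set d := Metric.diam (tsupport φ) with hd
    have hdpos : 0 < d := diam_tsupport_pos' n hn hφ.1
    refine ⟨H / d ^ N, by positivity, r₁, hr₁0, hr₁1, fun r hr0 hrr₁ => ?_⟩
    have hr1 : r ≤ 1 := hrr₁.trans hr₁1
    have hle : leA n (sc n r φ) ε₀ := by
      refine ⟨r / r₁, by positivity, by rw [div_le_one hr₁0]; exact hrr₁, ?_⟩
      rw [hε₀, sc_sc', div_mul_cancel₀ _ hr₁0.ne']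
    have hbb := hbd (sc n r φ) (sc_mem_A0' n hr0 hφ.1) hle
    rw [diam_tsupport_sc' n hr0, ← hd] at hbb
    calc _ ≤ H * (r * d) ^ (-(N:ℤ)) := hbb
      _ = (H / d ^ N) * r ^ (-(N:ℤ)) := by
          rw [zpow_neg, zpow_neg, zpow_natCast, zpow_natCast, mul_pow, mul_inv,
            div_eq_mul_inv]; ring
      _ ≤ (H / d ^ N) * r ^ (-((max N q : ℕ) : ℤ)) := by
          refine mul_le_mul_of_nonneg_left ?_ (by positivity)
          rw [zpow_neg, zpow_neg, zpow_natCast, zpow_natCast]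
          exact inv_anti₀ (by positivity)
            (pow_le_pow_of_le_one hr0.le hr1 (le_max_left N q))
end

section
/- Let Ω ⊆ ℝⁿ be open and let (u_ε)_{ε∈(0,1]} be a net of smooth functions u_ε : Ω → ℝ that is moderate. Then the following are equivalent: (a) for every compact K ⊆ Ω and every m ∈ ℕ there exist H ∈ ℝ_{>0} and ε₀ ∈ (0,1] such that sup_{x∈K} |u_ε(x)| ≤ H·ε^m for all ε ∈ (0,ε₀]; (b) for every compact K ⊆ Ω, every multi-index α ∈ ℕⁿ and every m ∈ ℕ there exist H ∈ ℝ_{>0} and ε₀ ∈ (0,1] such that sup_{x∈K} |∂^α u_ε(x)| ≤ H·ε^m for all ε ∈ (0,ε₀]. (In other words, for moderate nets, negligibility of the zeroth-order part implies negligibility of all derivatives.) -/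
/-- A net `(u_ε)_{ε∈(0,1]}` of smooth functions on `Ω` is moderate: for every
compact `K ⊆ Ω` and every multi-index `α` there are `N ∈ ℕ`, `H > 0` and
`ε₀ ∈ (0,1]` with `sup_{x∈K} |∂^α u_ε(x)| ≤ H·ε^{-N}` for all `ε ∈ (0,ε₀]`. -/
def IsModerate (n : ℕ) (Ω : Set (Fin n → ℝ)) (u : ℝ → (Fin n → ℝ) → ℝ) : Prop :=
  ∀ K : Set (Fin n → ℝ), K ⊆ Ω → IsCompact K → ∀ α : Fin n → ℕ,
    ∃ N : ℕ, ∃ H : ℝ, 0 < H ∧ ∃ ε₀ : ℝ, 0 < ε₀ ∧ ε₀ ≤ 1 ∧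
      ∀ ε : ℝ, 0 < ε → ε ≤ ε₀ →
        (⨆ x ∈ K, |pderivMulti n α (u ε) x|) ≤ H * ε ^ (-(N : ℤ))

open Set Metric

/-- Single partial derivative. -/
noncomputable def pd (n : ℕ) (i : Fin n) (f : (Fin n → ℝ) → ℝ) : (Fin n → ℝ) → ℝ :=
  fun x => fderiv ℝ f x (Pi.single i 1)

lemma pderivList_cons (n : ℕ) (i : Fin n) (l : List (Fin n)) (f : (Fin n → ℝ) → ℝ) :
    pderivList n (i :: l) f = pderivList n l (pd n i f) := rfl

lemma pderivList_append (n : ℕ) (l₁ l₂ : List (Fin n)) (f : (Fin n → ℝ) → ℝ) :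
    pderivList n (l₁ ++ l₂) f = pderivList n l₂ (pderivList n l₁ f) := by
  induction l₁ generalizing f with
  | nil => rfl
  | cons i t ih => rw [List.cons_append, pderivList_cons, pderivList_cons, ih]

variable {n : ℕ} {Ω : Set (Fin n → ℝ)}

lemma pd_congr (hΩ : IsOpen Ω) {f g : (Fin n → ℝ) → ℝ} (h : EqOn f g Ω) (i : Fin n) :
    EqOn (pd n i f) (pd n i g) Ω := by
  intro x hx
  have : f =ᶠ[nhds x] g := Filter.eventuallyEq_of_mem (hΩ.mem_nhds hx) h
  simp only [pd, this.fderiv_eq]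

lemma pderivList_congr (hΩ : IsOpen Ω) {f g : (Fin n → ℝ) → ℝ} (h : EqOn f g Ω)
    (l : List (Fin n)) : EqOn (pderivList n l f) (pderivList n l g) Ω := by
  induction l generalizing f g with
  | nil => exact h
  | cons i t ih => exact ih (pd_congr hΩ h i)

lemma pd_smooth (hΩ : IsOpen Ω) {f : (Fin n → ℝ) → ℝ} (hf : ContDiffOn ℝ (⊤ : ℕ∞) f Ω) (i : Fin n) :
    ContDiffOn ℝ (⊤ : ℕ∞) (pd n i f) Ω := by
  intro x hx
  have h1 : ContDiffAt ℝ (⊤ : ℕ∞) f x := hf.contDiffAt (hΩ.mem_nhds hx)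
  have h2 : ContDiffAt ℝ (⊤ : ℕ∞) (fderiv ℝ f) x := h1.fderiv_right (by simp)
  exact ((h2.clm_apply contDiffAt_const)).contDiffWithinAt

lemma pderivList_smooth (hΩ : IsOpen Ω) {f : (Fin n → ℝ) → ℝ} (hf : ContDiffOn ℝ (⊤ : ℕ∞) f Ω)
    (l : List (Fin n)) : ContDiffOn ℝ (⊤ : ℕ∞) (pderivList n l f) Ω := by
  induction l generalizing f with
  | nil => exact hf
  | cons i t ih => exact ih (pd_smooth hΩ hf i)

lemma pd_comm (hΩ : IsOpen Ω) {f : (Fin n → ℝ) → ℝ}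
    (hf : ContDiffOn ℝ (⊤ : ℕ∞) f Ω) (i j : Fin n) {x : Fin n → ℝ} (hx : x ∈ Ω) :
    pd n i (pd n j f) x = pd n j (pd n i f) x := by
  have hev : ∀ᶠ y in nhds x, HasFDerivAt f (fderiv ℝ f y) y := by
    filter_upwards [hΩ.mem_nhds hx] with y hy
    exact ((hf.contDiffAt (hΩ.mem_nhds hy)).differentiableAt (by simp)).hasFDerivAt
  have hfd : HasFDerivAt (fderiv ℝ f) (fderiv ℝ (fderiv ℝ f) x) x := by
    have h2 : ContDiffAt ℝ (⊤ : ℕ∞) (fderiv ℝ f) x :=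
      (hf.contDiffAt (hΩ.mem_nhds hx)).fderiv_right (by simp)
    exact (h2.differentiableAt (by simp)).hasFDerivAt
  have hsymm := second_derivative_symmetric_of_eventually hev hfd
  have key : ∀ v w : Fin n → ℝ,
      fderiv ℝ (fun y => fderiv ℝ f y w) x v = fderiv ℝ (fderiv ℝ f) x v w := by
    intro v w
    have : HasFDerivAt (fun y => fderiv ℝ f y w)
        ((ContinuousLinearMap.apply ℝ ℝ w).comp (fderiv ℝ (fderiv ℝ f) x)) x :=
      (ContinuousLinearMap.apply ℝ ℝ w).hasFDerivAt.comp x hfd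
    rw [this.fderiv]; rfl
  show fderiv ℝ (fun y => fderiv ℝ f y (Pi.single j 1)) x (Pi.single i 1) = _
  rw [key, hsymm, ← key]
  rfl

lemma pderivList_perm (hΩ : IsOpen Ω) {l l' : List (Fin n)} (hp : l.Perm l') :
    ∀ f : (Fin n → ℝ) → ℝ, ContDiffOn ℝ (⊤ : ℕ∞) f Ω →
      EqOn (pderivList n l f) (pderivList n l' f) Ω := by
  induction hp with
  | nil => intro f _; exact fun x _ => rfl
  | cons i _ ih =>
      intro f hf
      exact ih (pd n i f) (pd_smooth hΩ hf i)
  | swap i j t =>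
      intro f hf
      rw [pderivList_cons, pderivList_cons, pderivList_cons, pderivList_cons]
      exact pderivList_congr hΩ (fun x hx => pd_comm hΩ hf i j hx) t
  | trans h₁ h₂ ih₁ ih₂ =>
      intro f hf
      exact (ih₁ f hf).trans (ih₂ f hf)

lemma perm_canonical (l : List (Fin n)) :
    l.Perm ((List.finRange n).flatMap fun i => List.replicate (l.count i) i) := by
  rw [List.perm_iff_count]
  intro a
  rw [List.count_flatMap]
  have h : ∀ i : Fin n, (List.count a ∘ fun i => List.replicate (l.count i) i) i
      = if a = i then l.count a else 0 := by
    intro i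
    simp only [Function.comp_apply, List.count_replicate, beq_iff_eq]
    by_cases hi : a = i
    · subst hi; simp
    · rw [if_neg (Ne.symm hi), if_neg hi]
  rw [funext h, ← Fin.sum_univ_def]
  simp

/-- `pderivMulti` along the count multi-index agrees with `pderivList` on `Ω`. -/
lemma pderivList_eq_pderivMulti (hΩ : IsOpen Ω) {f : (Fin n → ℝ) → ℝ}
    (hf : ContDiffOn ℝ (⊤ : ℕ∞) f Ω) (l : List (Fin n)) :
    EqOn (pderivList n l f) (pderivMulti n (fun i => l.count i) f) Ω :=
  pderivList_perm hΩ (perm_canonical l) f hf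

/- sup helpers -/
lemma biSup_le_of_forall {K : Set (Fin n → ℝ)} {g : (Fin n → ℝ) → ℝ} {a : ℝ}
    (ha : 0 ≤ a) (h : ∀ x ∈ K, g x ≤ a) : (⨆ x ∈ K, g x) ≤ a :=
  Real.iSup_le (fun x => Real.iSup_le (fun hx => h x hx) ha) ha

lemma le_biSup_of_mem {K : Set (Fin n → ℝ)} {g : (Fin n → ℝ) → ℝ}
    (hK : IsCompact K) (hg : ContinuousOn g K) {x : Fin n → ℝ} (hx : x ∈ K) :
    g x ≤ ⨆ y ∈ K, g y := by
  obtain ⟨M, hM⟩ := hK.bddAbove_image hg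
  have hb : ∀ y, (⨆ _ : y ∈ K, g y) ≤ max M 0 := by
    intro y
    exact Real.iSup_le
      (fun hy => le_max_of_le_left (hM (mem_image_of_mem g hy))) (le_max_right _ _)
  calc g x = ⨆ _ : x ∈ K, g x := (ciSup_pos (f := fun _ : x ∈ K => g x) hx).symm
    _ ≤ ⨆ y ∈ K, g y := le_ciSup ⟨max M 0, by rintro _ ⟨y, rfl⟩; exact hb y⟩ x

/-- Core analytic step: interpolation of the first derivative. -/
lemma core_step (hΩ : IsOpen Ω) {f : (Fin n → ℝ) → ℝ} (hf : ContDiffOn ℝ (⊤ : ℕ∞) f Ω)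
    {K' : Set (Fin n → ℝ)} (hK' : K' ⊆ Ω) (i : Fin n)
    {x : Fin n → ℝ} {T S0 S2 : ℝ} (hT : 0 < T)
    (hseg : ∀ t ∈ Icc (0:ℝ) T, x + t • (Pi.single i 1 : Fin n → ℝ) ∈ K')
    (hb0 : ∀ y ∈ K', |f y| ≤ S0) (hb2 : ∀ y ∈ K', |pd n i (pd n i f) y| ≤ S2) :
    |pd n i f x| ≤ 2 * S0 / T + S2 * T := by
  set v : Fin n → ℝ := Pi.single i 1 with hv
  have hsegΩ : ∀ t ∈ Icc (0:ℝ) T, x + t • v ∈ Ω := fun t ht => hK' (hseg t ht)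
  have hS2 : 0 ≤ S2 := le_trans (abs_nonneg _) (hb2 _ (hseg 0 (by simp [hT.le])))
  -- derivative of the line composition
  have hline : ∀ (g : (Fin n → ℝ) → ℝ), ContDiffOn ℝ (⊤ : ℕ∞) g Ω → ∀ t ∈ Icc (0:ℝ) T,
      HasDerivAt (fun s => g (x + s • v)) (pd n i g (x + t • v)) t := by
    intro g hg t ht
    have hp : x + t • v ∈ Ω := hsegΩ t ht
    have line : HasDerivAt (fun s : ℝ => x + s • v) v t := by
      simpa using ((hasDerivAt_id t).smul_const v).const_add x
    have F : HasFDerivAt g (fderiv ℝ g (x + t • v)) (x + t • v) :=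
      ((hg.contDiffAt (hΩ.mem_nhds hp)).differentiableAt (by simp)).hasFDerivAt
    exact F.comp_hasDerivAt t line
  have hf1 : ContDiffOn ℝ (⊤ : ℕ∞) (pd n i f) Ω := by
    intro y hy
    have h1 : ContDiffAt ℝ (⊤ : ℕ∞) f y := hf.contDiffAt (hΩ.mem_nhds hy)
    exact ((h1.fderiv_right (by simp)).clm_apply contDiffAt_const).contDiffWithinAt
  -- first MVT application: g1 s - g1 0 bounded
  have h1bound : ∀ s ∈ Icc (0:ℝ) T,
      |pd n i f (x + s • v) - pd n i f (x + (0:ℝ) • v)| ≤ S2 * s := by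
    have := norm_image_sub_le_of_norm_deriv_le_segment'
      (f := fun s => pd n i f (x + s • v)) (f' := fun s => pd n i (pd n i f) (x + s • v))
      (C := S2) (fun t ht => (hline (pd n i f) hf1 t ht).hasDerivWithinAt)
      (fun t ht => by
        rw [Real.norm_eq_abs]; exact hb2 _ (hseg t (Ico_subset_Icc_self ht)))
    intro s hs
    simpa [Real.norm_eq_abs] using this s hs
  -- second application to φ
  have hφ : ∀ s ∈ Icc (0:ℝ) T,
      HasDerivAt (fun s => f (x + s • v) - s * pd n i f (x + (0:ℝ) • v))
        (pd n i f (x + s • v) - pd n i f (x + (0:ℝ) • v)) s := by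
    intro s hs
    exact (hline f hf s hs).sub (hasDerivAt_mul_const _)
  have h2bound := norm_image_sub_le_of_norm_deriv_le_segment'
      (f := fun s => f (x + s • v) - s * pd n i f (x + (0:ℝ) • v))
      (f' := fun s => pd n i f (x + s • v) - pd n i f (x + (0:ℝ) • v))
      (C := S2 * T) (fun t ht => (hφ t ht).hasDerivWithinAt)
      (fun t ht => by
        rw [Real.norm_eq_abs]
        exact le_trans (h1bound t (Ico_subset_Icc_self ht))
          (mul_le_mul_of_nonneg_left ht.2.le hS2))
  have hend := h2bound T (by constructor <;> simp [hT.le])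
  rw [Real.norm_eq_abs] at hend
  simp only [zero_smul, add_zero, zero_mul, sub_zero] at hend
  have hT0 : |f (x + T • v)| ≤ S0 := hb0 _ (hseg T (by constructor <;> simp [hT.le]))
  have hT1 : |f x| ≤ S0 := hb0 _ (by simpa using hseg 0 (by constructor <;> simp [hT.le]))
  -- hend : |f (x + T • v) - T * pd n i f x - f x| ≤ S2 * T * (T - 0)
  have key : T * |pd n i f x| ≤ 2 * S0 + S2 * T * T := by
    have habs : |T * pd n i f x| ≤ S0 + S0 + S2 * T * T := by
      have e : T * pd n i f x
          = f (x + T • v) - (f (x + T • v) - T * pd n i f x - f x) - f x := by ring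
      rw [e]
      have h5 : |f (x + T • v) - T * pd n i f x - f x| ≤ S2 * T * T := by
        have := hend
        nlinarith [hend]
      calc |f (x + T • v) - (f (x + T • v) - T * pd n i f x - f x) - f x|
          ≤ |f (x + T • v) - (f (x + T • v) - T * pd n i f x - f x)| + |f x| := abs_sub _ _
        _ ≤ |f (x + T • v)| + |f (x + T • v) - T * pd n i f x - f x| + |f x| := by
            have := abs_sub (f (x + T • v)) (f (x + T • v) - T * pd n i f x - f x)
            linarith
        _ ≤ S0 + S0 + S2 * T * T := by linarith
    rw [abs_mul, abs_of_pos hT] at habs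
    linarith
  have : |pd n i f x| ≤ (2 * S0 + S2 * T * T) / T := by
    rw [le_div_iff₀ hT]; linarith
  calc |pd n i f x| ≤ (2 * S0 + S2 * T * T) / T := this
    _ = 2 * S0 / T + S2 * T := by field_simp

/-- The induction step: negligibility passes to one more derivative. -/
lemma neg_step (hΩ : IsOpen Ω) {u : ℝ → (Fin n → ℝ) → ℝ}
    (hu : ∀ ε : ℝ, 0 < ε → ε ≤ 1 → ContDiffOn ℝ (⊤ : ℕ∞) (u ε) Ω)
    (l : List (Fin n)) (i : Fin n)
    (hneg : ∀ K ⊆ Ω, IsCompact K → ∀ m : ℕ, ∃ H : ℝ, 0 < H ∧ ∃ ε₀ : ℝ, 0 < ε₀ ∧ ε₀ ≤ 1 ∧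
      ∀ ε : ℝ, 0 < ε → ε ≤ ε₀ → ∀ x ∈ K, |pderivList n l (u ε) x| ≤ H * ε ^ m)
    (hmod2 : ∀ K ⊆ Ω, IsCompact K → ∃ N : ℕ, ∃ H : ℝ, 0 < H ∧ ∃ ε₀ : ℝ, 0 < ε₀ ∧ ε₀ ≤ 1 ∧
      ∀ ε : ℝ, 0 < ε → ε ≤ ε₀ → ∀ x ∈ K,
        |pderivList n (l ++ [i, i]) (u ε) x| ≤ H * ε ^ (-(N : ℤ)))
    {K : Set (Fin n → ℝ)} (hK : K ⊆ Ω) (hKc : IsCompact K) (m : ℕ) :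
    ∃ H : ℝ, 0 < H ∧ ∃ ε₀ : ℝ, 0 < ε₀ ∧ ε₀ ≤ 1 ∧
      ∀ ε : ℝ, 0 < ε → ε ≤ ε₀ → ∀ x ∈ K, |pderivList n (l ++ [i]) (u ε) x| ≤ H * ε ^ m := by
  obtain ⟨r, hr, hrsub⟩ := hKc.exists_cthickening_subset_open hΩ hK
  set K' := Metric.cthickening r K with hK'def
  have hK'c : IsCompact K' := hKc.cthickening
  obtain ⟨N, H2, hH2, ε₂, hε₂, hε₂1, hM⟩ := hmod2 K' hrsub hK'c
  obtain ⟨H0, hH0, ε₁, hε₁, hε₁1, hN⟩ := hneg K' hrsub hK'c (2 * (m + N))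
  set r' := min r 1 with hr'def
  have hr' : 0 < r' := lt_min hr one_pos
  refine ⟨2 * H0 / r' + H2 * r', by positivity, min ε₁ ε₂, lt_min hε₁ hε₂,
    le_trans (min_le_left _ _) hε₁1, fun ε hε hεle x hx => ?_⟩
  have hεle1 : ε ≤ ε₁ := le_trans hεle (min_le_left _ _)
  have hεle2 : ε ≤ ε₂ := le_trans hεle (min_le_right _ _)
  have hε1 : ε ≤ 1 := hεle1.trans hε₁1
  set T := r' * ε ^ (m + N) with hTdef
  have hT : 0 < T := by positivity
  have hTr : T ≤ r := by
    calc T ≤ r' * 1 :=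
        mul_le_mul_of_nonneg_left (pow_le_one₀ hε.le hε1) hr'.le
      _ = r' := mul_one r'
      _ ≤ r := min_le_left r 1
  have hseg : ∀ t ∈ Icc (0:ℝ) T, x + t • (Pi.single i 1 : Fin n → ℝ) ∈ K' := by
    intro t ht
    apply mem_cthickening_of_dist_le _ x r K hx
    have hd : dist (x + t • (Pi.single i 1 : Fin n → ℝ)) x = |t| := by
      rw [dist_eq_norm]
      simp [norm_smul, Pi.norm_single]
    rw [hd, abs_of_nonneg ht.1]
    exact ht.2.trans hTr
  have hsm : ContDiffOn ℝ (⊤ : ℕ∞) (pderivList n l (u ε)) Ω := pderivList_smooth hΩ (hu ε hε hε1) l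
  have happ1 : pderivList n (l ++ [i]) (u ε) = pd n i (pderivList n l (u ε)) := by
    rw [pderivList_append]; rfl
  have happ2 : pderivList n (l ++ [i, i]) (u ε)
      = pd n i (pd n i (pderivList n l (u ε))) := by
    rw [pderivList_append]; rfl
  have hbound := core_step hΩ hsm hrsub i hT hseg
    (S0 := H0 * ε ^ (2 * (m + N))) (S2 := H2 * ε ^ (-(N : ℤ)))
    (fun y hy => hN ε hε hεle1 y hy)
    (fun y hy => by rw [← happ2]; exact hM ε hε hεle2 y hy)
  rw [happ1]
  refine hbound.trans ?_
  -- the ε-power algebra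
  have hεN : (0:ℝ) < ε ^ N := pow_pos hε N
  have hzpow : ε ^ (-(N:ℤ)) = (ε ^ N)⁻¹ := by rw [zpow_neg, zpow_natCast]
  have hq : ε ^ (m + N) ≤ ε ^ m := pow_le_pow_of_le_one hε.le hε1 (Nat.le_add_right m N)
  have e2 : H2 * ε ^ (-(N:ℤ)) * (r' * ε ^ (m + N)) = H2 * r' * ε ^ m := by
    rw [hzpow, pow_add]
    field_simp
  have e1 : 2 * (H0 * ε ^ (2 * (m + N))) / (r' * ε ^ (m + N))
      = (2 * H0 / r') * ε ^ (m + N) := by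
    rw [two_mul (m + N), pow_add]
    have hne : ε ^ (m + N) ≠ 0 := (pow_pos hε _).ne'
    field_simp
  rw [hTdef, e1, e2, add_mul]
  have h1 : 2 * H0 / r' * ε ^ (m + N) ≤ 2 * H0 / r' * ε ^ m :=
    mul_le_mul_of_nonneg_left hq (by positivity)
  linarith

/-- For a moderate net `(u_ε)` of smooth functions on an open set `Ω`,
negligibility of the zeroth-order part implies (and is hence equivalent to)
negligibility of all derivatives. -/
theorem negligible_iff_of_moderate (n : ℕ) (hn : 1 ≤ n)
    (Ω : Set (Fin n → ℝ)) (hΩ : IsOpen Ω) (u : ℝ → (Fin n → ℝ) → ℝ)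
    (hu : ∀ ε : ℝ, 0 < ε → ε ≤ 1 → ContDiffOn ℝ (⊤ : ℕ∞) (u ε) Ω)
    (hmod : IsModerate n Ω u) :
    (∀ K : Set (Fin n → ℝ), K ⊆ Ω → IsCompact K → ∀ m : ℕ,
        ∃ H : ℝ, 0 < H ∧ ∃ ε₀ : ℝ, 0 < ε₀ ∧ ε₀ ≤ 1 ∧
          ∀ ε : ℝ, 0 < ε → ε ≤ ε₀ → (⨆ x ∈ K, |u ε x|) ≤ H * ε ^ m) ↔
      (∀ K : Set (Fin n → ℝ), K ⊆ Ω → IsCompact K → ∀ α : Fin n → ℕ, ∀ m : ℕ,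
        ∃ H : ℝ, 0 < H ∧ ∃ ε₀ : ℝ, 0 < ε₀ ∧ ε₀ ≤ 1 ∧
          ∀ ε : ℝ, 0 < ε → ε ≤ ε₀ →
            (⨆ x ∈ K, |pderivMulti n α (u ε) x|) ≤ H * ε ^ m) := by
  constructor
  · -- forward: the hard direction
    intro ha
    -- pointwise moderateness along arbitrary lists
    have hmodList : ∀ l : List (Fin n), ∀ K ⊆ Ω, IsCompact K →
        ∃ N : ℕ, ∃ H : ℝ, 0 < H ∧ ∃ ε₀ : ℝ, 0 < ε₀ ∧ ε₀ ≤ 1 ∧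
          ∀ ε : ℝ, 0 < ε → ε ≤ ε₀ → ∀ x ∈ K,
            |pderivList n l (u ε) x| ≤ H * ε ^ (-(N : ℤ)) := by
      intro l K hK hKc
      obtain ⟨N, H, hH, ε₀, h0, h1, hb⟩ := hmod K hK hKc (fun j => l.count j)
      refine ⟨N, H, hH, ε₀, h0, h1, fun ε hε hεle x hx => ?_⟩
      have hsm := hu ε hε (hεle.trans h1)
      have heq := pderivList_eq_pderivMulti hΩ hsm l (hK hx)
      rw [heq]
      refine le_trans
        (le_biSup_of_mem (g := fun y => |pderivMulti n (fun j => List.count j l) (u ε) y|)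
          hKc ?_ hx) (hb ε hε hεle)
      exact ((pderivList_smooth hΩ hsm _).continuousOn.mono hK).abs
    -- pointwise negligibility of the zeroth order part
    have hbase : ∀ K ⊆ Ω, IsCompact K → ∀ m : ℕ,
        ∃ H : ℝ, 0 < H ∧ ∃ ε₀ : ℝ, 0 < ε₀ ∧ ε₀ ≤ 1 ∧
          ∀ ε : ℝ, 0 < ε → ε ≤ ε₀ → ∀ x ∈ K,
            |pderivList n [] (u ε) x| ≤ H * ε ^ m := by
      intro K hK hKc m
      obtain ⟨H, hH, ε₀, h0, h1, hb⟩ := ha K hK hKc m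
      refine ⟨H, hH, ε₀, h0, h1, fun ε hε hεle x hx => ?_⟩
      refine le_trans (le_biSup_of_mem (g := fun y => |u ε y|) hKc ?_ hx) (hb ε hε hεle)
      exact (((hu ε hε (hεle.trans h1)).continuousOn).mono hK).abs
    -- all lists, by induction appending directions at the end
    have hall : ∀ l : List (Fin n), ∀ K ⊆ Ω, IsCompact K → ∀ m : ℕ,
        ∃ H : ℝ, 0 < H ∧ ∃ ε₀ : ℝ, 0 < ε₀ ∧ ε₀ ≤ 1 ∧
          ∀ ε : ℝ, 0 < ε → ε ≤ ε₀ → ∀ x ∈ K,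
            |pderivList n l (u ε) x| ≤ H * ε ^ m := by
      intro l
      induction l using List.reverseRecOn with
      | nil => exact hbase
      | append_singleton t j ih =>
          exact fun K hK hKc m =>
            neg_step hΩ hu t j ih (fun K' hK' hK'c => hmodList (t ++ [j, j]) K' hK' hK'c)
              hK hKc m
    intro K hK hKc α m
    obtain ⟨H, hH, ε₀, h0, h1, hb⟩ :=
      hall ((List.finRange n).flatMap fun i => List.replicate (α i) i) K hK hKc m
    refine ⟨H, hH, ε₀, h0, h1, fun ε hε hεle => ?_⟩
    exact biSup_le_of_forall (by positivity) (fun x hx => hb ε hε hεle x hx)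
  · -- reverse: take `α = 0`
    intro hb K hK hKc m
    obtain ⟨H, hH, ε₀, h0, h1, hB⟩ := hb K hK hKc (fun _ => 0) m
    refine ⟨H, hH, ε₀, h0, h1, fun ε hε hεle => ?_⟩
    have hnil : ((List.finRange n).flatMap fun i => List.replicate ((fun _ : Fin n => 0) i) i)
        = ([] : List (Fin n)) := by simp
    have hmulti : pderivMulti n (fun _ => 0) (u ε) = u ε := by
      unfold pderivMulti
      rw [hnil]
      rfl
    have := hB ε hε hεle
    rwa [hmulti] at this
end
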